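/- (Characterization of the dual set, first part.) In the star setup, let T be a face of the triangulation containing 0, and assume some point of T lies in the topological interior of N(T). Then T* = { w ∈ ℝ^d : ⟨w, z⟩ = γ(z) for all z ∈ T, and ⟨w, x⟩ ≤ γ(x) for all x ∈ N(T) }; that is, membership in the dual set can be tested using only the points of N(T) rather than all of ω. -/
import Mathlib


open Set Metric MeasureTheory Filter
open scoped RealInnerProductSpace

noncomputable section

/-- The closed simplex with vertex set `{0} ∪ S`. -/
def splx {d : ℕ} (S : Finset (EuclideanSpace ℝ (Fin d))) : Set (EuclideanSpace ℝ (Fin d)) :=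
  convexHull ℝ (insert (0 : EuclideanSpace ℝ (Fin d)) (S : Set (EuclideanSpace ℝ (Fin d))))

/-- **Star setup**: a conforming finite collection of `d`-simplices sharing the vertex `0`
whose union is a neighborhood of `0`, together with a convex function `γ` vanishing at `0`
which is affine on each simplex.  Each simplex is recorded by its finset `S` of nonzero
vertices, the simplex itself being `conv({0} ∪ S)`. -/
structure StarSetup (d : ℕ) where
  /-- The collection of (vertex sets of) `d`-simplices of the star. -/
  K : Finset (Finset (EuclideanSpace ℝ (Fin d)))
  /-- The piecewise affine convex function. -/
  γ : EuclideanSpace ℝ (Fin d) → ℝ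
  K_nonempty : K.Nonempty
  card_eq : ∀ S ∈ K, S.card = d
  zero_not_mem : ∀ S ∈ K, (0 : EuclideanSpace ℝ (Fin d)) ∉ S
  affine_indep : ∀ S ∈ K, AffineIndependent ℝ
    (fun p : (insert (0 : EuclideanSpace ℝ (Fin d)) (S : Set (EuclideanSpace ℝ (Fin d))) :
      Set (EuclideanSpace ℝ (Fin d))) => (p : EuclideanSpace ℝ (Fin d)))
  conforming : ∀ S₁ ∈ K, ∀ S₂ ∈ K, splx S₁ ∩ splx S₂ =
    convexHull ℝ (insert (0 : EuclideanSpace ℝ (Fin d))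
      ((S₁ : Set (EuclideanSpace ℝ (Fin d))) ∩ (S₂ : Set (EuclideanSpace ℝ (Fin d)))))
  nhd : (⋃ S ∈ K, splx S) ∈ nhds (0 : EuclideanSpace ℝ (Fin d))
  convex_γ : ConvexOn ℝ Set.univ γ
  γ_zero : γ 0 = 0
  affine_on : ∀ S ∈ K, ∃ (p : EuclideanSpace ℝ (Fin d)) (c : ℝ),
    ∀ x ∈ splx S, γ x = ⟪p, x⟫ + c

namespace StarSetup

variable {d : ℕ} (st : StarSetup d)

/-- The star `ω = ⋃_{K ∈ 𝒦} K` around the origin. -/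
def ω : Set (EuclideanSpace ℝ (Fin d)) := ⋃ S ∈ st.K, splx S

/-- The set of nonzero vertices `Z` of the star. -/
def Z : Set (EuclideanSpace ℝ (Fin d)) := ⋃ S ∈ st.K, (S : Set (EuclideanSpace ℝ (Fin d)))

/-- The local subdifferential `∂γ(0) = { w : ⟨w, x⟩ ≤ γ(x) for all x ∈ ω }`. -/
def subdiff : Set (EuclideanSpace ℝ (Fin d)) :=
  { w | ∀ x ∈ st.ω, ⟪w, x⟫ ≤ st.γ x }

/-- `S` records a face `conv({0} ∪ S)` of the triangulation containing `0`. -/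
def IsFace (S : Finset (EuclideanSpace ℝ (Fin d))) : Prop :=
  ∃ S' ∈ st.K, S ⊆ S'

/-- The dual set `T* = { w ∈ ∂γ(0) : ⟨w, z⟩ = γ(z) for all z ∈ T }` of the face
`T = conv({0} ∪ S)`. -/
def dual (S : Finset (EuclideanSpace ℝ (Fin d))) : Set (EuclideanSpace ℝ (Fin d)) :=
  { w ∈ st.subdiff | ∀ z ∈ splx S, ⟪w, z⟫ = st.γ z }

/-- `N(T) = ⋃ { K ∈ 𝒦 : T ⊆ K }` for the face `T = conv({0} ∪ S)`. -/
def N (S : Finset (EuclideanSpace ℝ (Fin d))) : Set (EuclideanSpace ℝ (Fin d)) :=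
  ⋃ S' ∈ {S' : Finset (EuclideanSpace ℝ (Fin d)) | S' ∈ st.K ∧ splx S ⊆ splx S'}, splx S'

end StarSetup

/-- **Characterization of the dual set, first part.**
If a point of the face `T = conv({0} ∪ S)` lies in the interior of `N(T)`, then membership
in the dual set `T*` can be tested using only the points of `N(T)`:
`T* = { w : ⟨w, z⟩ = γ(z) ∀ z ∈ T and ⟨w, x⟩ ≤ γ(x) ∀ x ∈ N(T) }`. -/
theorem stmt_16 (d : ℕ) (hd : 2 ≤ d) (st : StarSetup d)
    (S : Finset (EuclideanSpace ℝ (Fin d))) (hS : st.IsFace S)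
    (hint : ∃ x ∈ splx S, x ∈ interior (st.N S)) :
    st.dual S = { w : EuclideanSpace ℝ (Fin d) |
      (∀ z ∈ splx S, ⟪w, z⟫ = st.γ z) ∧ ∀ x ∈ st.N S, ⟪w, x⟫ ≤ st.γ x } := by
  obtain ⟨x₀, hx₀S, hx₀int⟩ := hint
  ext w
  constructor
  · rintro ⟨hw, heq⟩
    refine ⟨heq, fun x hx => hw x ?_⟩
    simp only [StarSetup.N, Set.mem_iUnion] at hx
    obtain ⟨S', ⟨hS', _⟩, hxS'⟩ := hx
    exact Set.mem_biUnion hS' hxS'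
  · rintro ⟨heq, hle⟩
    refine ⟨fun x _ => ?_, heq⟩
    -- consider f = γ - ⟨w,·⟩, convex, ≥ 0 on N S, = 0 at x₀ ∈ interior (N S)
    set f : EuclideanSpace ℝ (Fin d) → ℝ := fun x => st.γ x - ⟪w, x⟫ with hf
    have hconc : ConcaveOn ℝ Set.univ (fun x : EuclideanSpace ℝ (Fin d) => ⟪w, x⟫) := by
      refine ⟨convex_univ, fun x _ y _ a b _ _ _ => le_of_eq ?_⟩
      simp [inner_add_right, inner_smul_right]
    have hconv : ConvexOn ℝ Set.univ f := st.convex_γ.sub hconc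
    have hfx₀ : f x₀ = 0 := by
      simp only [hf, heq x₀ hx₀S, sub_self]
    have hlocal : IsLocalMin f x₀ := by
      have hmem : st.N S ∈ nhds x₀ := mem_interior_iff_mem_nhds.mp hx₀int
      filter_upwards [hmem] with y hy
      rw [hfx₀]
      exact sub_nonneg.mpr (hle y hy)
    have hmin : ∀ y, f x₀ ≤ f y :=
      IsMinOn.of_isLocalMin_of_convex_univ hlocal hconv
    have := hmin x
    rw [hfx₀] at this
    simp only [hf] at this
    linarith

end
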